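/- arXiv:1201.0335 — 6 statements merged into one kernel-verified Lean document; each statement's English description precedes it below -/
import Mathlib

section
/- Let α be a nonzero real number, ε > 0, h > 0 and η ∈ ℝ, and set τ = h + iη ∈ ℂ. Then the cubic equation λ³ − ετλ − τ/α = 0 has no purely imaginary root; that is, there is no real number b such that λ = ib satisfies λ³ − ετλ − τ/α = 0. -/
/-- For `α ≠ 0`, `ε > 0`, `h > 0`, `η ∈ ℝ` and `τ = h + iη`, the characteristic cubic
`λ³ - ετλ - τ/α = 0` has no purely imaginary root. -/
theorem stmt1 (α ε h η : ℝ) (hα : α ≠ 0) (hε : 0 < ε) (hh : 0 < h) :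
    ¬ ∃ b : ℝ,
      (Complex.I * (b : ℂ)) ^ 3
        - (ε : ℂ) * ((h : ℂ) + (η : ℂ) * Complex.I) * (Complex.I * (b : ℂ))
        - ((h : ℂ) + (η : ℂ) * Complex.I) / (α : ℂ) = 0 := by
  rintro ⟨b, hb⟩
  have hαc : (α : ℂ) ≠ 0 := by exact_mod_cast hα
  have hb' : ((α * ε * η * b - h : ℝ) : ℂ) + ((-(α * b^3) - α * ε * h * b - η : ℝ) : ℂ) * Complex.I = 0 := by
    have := mul_eq_zero_of_right (α : ℂ) hb
    field_simp at this
    push_cast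
    linear_combination this + ((ε:ℂ)*α*η*b - (α:ℂ)*b^3*Complex.I) * Complex.I_sq
  have h1 : α * ε * η * b - h = 0 := by
    have := congrArg Complex.re hb'; simpa [← Complex.ofReal_pow] using this
  have h2 : -(α * b^3) - α * ε * h * b - η = 0 := by
    have := congrArg Complex.im hb'; simpa [← Complex.ofReal_pow] using this
  -- b ≠ 0
  have hb0 : b ≠ 0 := by
    rintro rfl
    simp at h1
    nlinarith
  have key : α * b * (h * b^2 + ε * h^2 + ε * η^2) = 0 := by
    linear_combination (-h) * h2 + η * h1
  have hpos : 0 < h * b^2 + ε * h^2 + ε * η^2 := by positivity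
  rcases mul_eq_zero.mp key with h3 | h3
  · rcases mul_eq_zero.mp h3 with h4 | h4
    · exact hα h4
    · exact hb0 h4
  · exact hpos.ne' h3
end

section
/- Let α < 0, ε > 0, h > 0 and η ∈ ℝ, and set τ = h + iη ∈ ℂ. Then the cubic equation λ³ − ετλ − τ/α = 0 has exactly one root λ ∈ ℂ with Re λ < 0; that is, there exists a unique μ ∈ ℂ such that μ³ − ετμ − τ/α = 0 and Re μ < 0. -/
set_option maxHeartbeats 1000000

lemma link_cert (u v β a1 a2 a0 : ℝ) (hu : 0 < u) (hβ : 0 < β)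
    (hm : 0 < u^2+v^2) (hn : 0 < (1-β*u)^2+(β*v)^2)
    (hug : β*(u^2+v^2) < u)
    (X1 : a1*((1-β*u)^2+(β*v)^2) = 2*(u^2+v^2)*(u-β*(u^2+v^2)))
    (X3 : a2*((1-β*u)^2+(β*v)^2)
        = 2*(u^2-v^2-β*(u^2+v^2)*u) + (u^2+v^2)*((1-β*u)^2+(β*v)^2))
    (X4 : a0*((1-β*u)^2+(β*v)^2) = (u^2+v^2)^2)
    (hD3 : 0 < a1*(2*u*a2-a1) - (2*u)^2*a0)
    (hC1 : 0 < -u^3+3*u*v^2+β*(u^2+v^2)*(u^2-v^2)) : False := by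
  have hg : 0 < β*(u^2+v^2) := mul_pos hβ hm
  have hlink : (a1*(2*u*a2-a1) - (2*u)^2*a0) * ((1-β*u)^2+(β*v)^2)^2
      = 4*(u^2+v^2)*(u*(u-β*(u^2+v^2))^3
          - v^2*(3*u^2-3*(β*(u^2+v^2))*u+(β*(u^2+v^2))^2)) := by
    linear_combination (2*u*(a2*((1-β*u)^2+(β*v)^2)) - a1*((1-β*u)^2+(β*v)^2)
        - 2*(u^2+v^2)*(u-β*(u^2+v^2)))*X1
      + (2*u*(2*(u^2+v^2)*(u-β*(u^2+v^2))))*X3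
      - (4*u^2*((1-β*u)^2+(β*v)^2))*X4
  have hDhat : 0 < u*(u-β*(u^2+v^2))^3
      - v^2*(3*u^2-3*(β*(u^2+v^2))*u+(β*(u^2+v^2))^2) := by
    by_contra hcon
    push_neg at hcon
    have h1 := mul_pos hD3 (mul_pos hn hn)
    nlinarith [hlink, mul_nonneg hm.le (neg_nonneg.mpr hcon)]
  have hug' : 0 < u - β*(u^2+v^2) := by linarith
  have h3ug : 0 < 3*u - β*(u^2+v^2) := by linarith
  have hquad : 0 < 3*u^2-3*(β*(u^2+v^2))*u+(β*(u^2+v^2))^2 := by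
    nlinarith [sq_nonneg (2*u-β*(u^2+v^2)), mul_pos hg hg]
  nlinarith [mul_pos hDhat h3ug, mul_pos hC1 hquad,
    mul_nonneg (mul_nonneg (mul_pos hu hug').le hg.le)
      (sq_nonneg (2*u-β*(u^2+v^2)))]

lemma core_real (a b c d β : ℝ) (ha : a < 0) (hc : c < 0) (hβ : 0 < β)
    (E1 : -d^2 + c^2 - b*d - b^2 + a*c + a^2
        = β * (-2*b*c*d - b^2*c - a*d^2 + a*c^2 - 2*a*b*d + a^2*c))
    (E2 : 2*c*d + b*c + a*d + 2*a*b
        = β * (-b*d^2 + b*c^2 - b^2*d + 2*a*c*d + 2*a*b*c + a^2*d))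
    (hK : 0 < -2*b*c*d - b^2*c - a*d^2 + a*c^2 - 2*a*b*d + a^2*c) : False := by
  have hu : 0 < -(a+c) := by linarith
  have hm : 0 < (-(a+c))^2 + (b+d)^2 := by nlinarith [mul_pos hu hu, sq_nonneg (b+d)]
  have hn : (0:ℝ) < (1-β*(-(a+c)))^2+(β*(b+d))^2 := by
    rcases (by positivity : (0:ℝ) ≤ (1-β*(-(a+c)))^2+(β*(b+d))^2).lt_or_eq with hlt | heq
    · exact hlt
    · exfalso
      have T4 : ((a*c-b*d)^2 + (a*d+b*c)^2) * ((1-β*(-(a+c)))^2+(β*(b+d))^2)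
          = ((-(a+c))^2 + (b+d)^2)^2 := by
        linear_combination (d^2 - c^2 + 3*b*d + 2*b*c*d*β + b^2 + b^2*c*β + a*d^2*β - 3*a*c - a*c^2*β + 2*a*b*d*β - a^2 - a^2*c*β) * E1
          + (-2*c*d + b*d^2*β - 3*b*c - b*c^2*β + b^2*d*β - 3*a*d - 2*a*c*d*β - 2*a*b - 2*a*b*c*β - a^2*d*β) * E2
      rw [← heq, mul_zero] at T4
      nlinarith [hm, T4]
  have hD2 : (0:ℝ) < c^2 + d^2 := by nlinarith [mul_pos_of_neg_of_neg hc hc, sq_nonneg d]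
  have T1 : ((a+c)*(a*c-b*d) + (b+d)*(a*d+b*c)) * ((1-β*(-(a+c)))^2+(β*(b+d))^2)
      = ((-(a+c))^2 + (b+d)^2)*(β*((-(a+c))^2 + (b+d)^2) + (a+c)) := by
    linear_combination (d^2*β - c - c^2*β + 2*b*d*β + b^2*β - a - 2*a*c*β - a^2*β) * E1
      + (-d - 2*c*d*β - b - 2*b*c*β - 2*a*d*β - 2*a*b*β) * E2
  have hADCB : (a+c)*(a*c-b*d) + (b+d)*(a*d+b*c) < 0 := by
    have e : (a+c)*(a*c-b*d) + (b+d)*(a*d+b*c) = a*(c^2+d^2) + c*(a^2+b^2) := by ring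
    rw [e]
    have h1 : a*(c^2+d^2) < 0 := mul_neg_of_neg_of_pos ha hD2
    have h2 : c*(a^2+b^2) ≤ 0 := mul_nonpos_of_nonpos_of_nonneg hc.le (by positivity)
    linarith
  have hug : β*((-(a+c))^2 + (b+d)^2) < -(a+c) := by
    by_contra hcon
    push_neg at hcon
    have h1 := mul_neg_of_neg_of_pos hADCB hn
    have h2 : (0:ℝ) ≤ ((-(a+c))^2 + (b+d)^2)*(β*((-(a+c))^2 + (b+d)^2) + (a+c)) :=
      mul_nonneg hm.le (by linarith)
    linarith [T1]
  have hA : (0:ℝ) < -2*a := by linarith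
  have hC : (0:ℝ) < -2*c := by linarith
  have ha1 : 0 < (-2*a)*(c^2+d^2) + (a^2+b^2)*(-2*c) := by
    nlinarith [mul_pos hA hD2, mul_nonneg (by positivity : (0:ℝ) ≤ a^2+b^2) hC.le]
  refine link_cert (-(a+c)) (b+d) β
    ((-2*a)*(c^2+d^2) + (a^2+b^2)*(-2*c)) (a^2+b^2+c^2+d^2+4*a*c) ((a^2+b^2)*(c^2+d^2))
    hu hβ hm hn hug ?_ ?_ ?_ ?_ ?_
  · linear_combination (-2*d^2*β + 2*c + 2*c^2*β - 4*b*d*β - 2*b^2*β + 2*a + 4*a*c*β + 2*a^2*β) * E1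
      + (2*d + 4*c*d*β + 2*b + 4*b*c*β + 4*a*d*β + 4*a*b*β) * E2
  · linear_combination (-2 - 2*c*β - 2*a*β) * E1 + (-2*d*β - 2*b*β) * E2
  · linear_combination (d^2 - c^2 + 3*b*d + 2*b*c*d*β + b^2 + b^2*c*β + a*d^2*β - 3*a*c - a*c^2*β + 2*a*b*d*β - a^2 - a^2*c*β) * E1
      + (-2*c*d + b*d^2*β - 3*b*c - b*c^2*β + b^2*d*β - 3*a*d - 2*a*c*d*β - 2*a*b - 2*a*b*c*β - a^2*d*β) * E2
  · nlinarith [mul_pos (mul_pos hA hC) (mul_pos (by linarith : (0:ℝ) < 2*(-(a+c))) ha1),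
      mul_nonneg (mul_pos hA hC).le (sq_nonneg ((a^2+b^2)-(c^2+d^2)))]
  · have h1 := mul_pos hK hn
    have e : -(-(a+c))^3+3*(-(a+c))*(b+d)^2+β*((-(a+c))^2+(b+d)^2)*((-(a+c))^2-(b+d)^2)
        = (-2*b*c*d - b^2*c - a*d^2 + a*c^2 - 2*a*b*d + a^2*c) * ((1-β*(-(a+c)))^2+(β*(b+d))^2) := by
      linear_combination (d^2*β + c + c^2*β + 2*b*d*β + b^2*β + a + 2*a*c*β + a^2*β) * E1
        + (-d - b) * E2
    linarith [e, h1]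

lemma root_re_ne (α ε h η : ℝ) (hα : α < 0) (hε : 0 < ε) (hh : 0 < h) (μ : ℂ)
    (hroot : μ^3 - (ε:ℂ)*((h:ℂ)+(η:ℂ)*Complex.I)*μ - ((h:ℂ)+(η:ℂ)*Complex.I)/(α:ℂ) = 0) :
    μ.re ≠ 0 := by
  intro h0
  have hα' : (α:ℂ) ≠ 0 := Complex.ofReal_ne_zero.mpr hα.ne
  have h1 : μ^3 - (ε:ℂ)*((h:ℂ)+(η:ℂ)*Complex.I)*μ = ((h:ℂ)+(η:ℂ)*Complex.I)/(α:ℂ) := by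
    linear_combination hroot
  have H : (μ*μ*μ - (ε:ℂ)*((h:ℂ)+(η:ℂ)*Complex.I)*μ) * (α:ℂ) = (h:ℂ)+(η:ℂ)*Complex.I := by
    rw [show μ*μ*μ = μ^3 by ring, h1, div_mul_cancel₀ _ hα']
  have HR := congrArg Complex.re H
  have HI := congrArg Complex.im H
  simp only [Complex.mul_re, Complex.mul_im, Complex.sub_re, Complex.sub_im, Complex.add_re,
    Complex.add_im, Complex.ofReal_re, Complex.ofReal_im, Complex.I_re, Complex.I_im,
    mul_zero, zero_mul, mul_one, sub_zero, zero_add, add_zero] at HR HI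
  rw [h0] at HR HI
  have key : h + h*(α*ε*μ.im)^2 + ε*(α*μ.im*μ.im)^2 = 0 := by
    linear_combination (-1)*HR + (-(α*ε*μ.im))*HI
  nlinarith [key, hh, mul_nonneg hh.le (sq_nonneg (α*ε*μ.im)),
    mul_nonneg hε.le (sq_nonneg (α*μ.im*μ.im))]

lemma uniq_aux (α ε h η : ℝ) (hα : α < 0) (hε : 0 < ε) (hh : 0 < h) (μ ν : ℂ)
    (hμ : μ^3 - (ε:ℂ)*((h:ℂ)+(η:ℂ)*Complex.I)*μ - ((h:ℂ)+(η:ℂ)*Complex.I)/(α:ℂ) = 0)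
    (hν : ν^3 - (ε:ℂ)*((h:ℂ)+(η:ℂ)*Complex.I)*ν - ((h:ℂ)+(η:ℂ)*Complex.I)/(α:ℂ) = 0)
    (hμre : μ.re < 0) (hνre : ν.re < 0) : μ = ν := by
  by_contra hne
  have hα' : (α:ℂ) ≠ 0 := Complex.ofReal_ne_zero.mpr hα.ne
  have hQ : μ^2 + μ*ν + ν^2 = (ε:ℂ)*((h:ℂ)+(η:ℂ)*Complex.I) := by
    have h0 : (μ-ν)*(μ^2+μ*ν+ν^2 - (ε:ℂ)*((h:ℂ)+(η:ℂ)*Complex.I)) = 0 := by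
      linear_combination hμ - hν
    rcases mul_eq_zero.mp h0 with h' | h'
    · exact absurd (sub_eq_zero.mp h') hne
    · exact sub_eq_zero.mp h'
  have hτK : (h:ℂ)+(η:ℂ)*Complex.I = -(α:ℂ)*(μ*ν*(μ+ν)) := by
    have h1 : μ^3 - (ε:ℂ)*((h:ℂ)+(η:ℂ)*Complex.I)*μ = ((h:ℂ)+(η:ℂ)*Complex.I)/(α:ℂ) := by
      linear_combination hμ
    have h2 : (h:ℂ)+(η:ℂ)*Complex.I = (μ^3 - (ε:ℂ)*((h:ℂ)+(η:ℂ)*Complex.I)*μ)*(α:ℂ) := by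
      rw [h1, div_mul_cancel₀ _ hα']
    linear_combination h2 + (α:ℂ)*μ*hQ
  have hβpos : 0 < ε*(-α) := mul_pos hε (neg_pos.mpr hα)
  have hβc : μ*μ + μ*ν + ν*ν = ((ε*(-α) : ℝ):ℂ)*(μ*ν*(μ+ν)) := by
    push_cast
    linear_combination hQ + (ε:ℂ)*hτK
  have hKre : 0 < (μ*ν*(μ+ν)).re := by
    by_contra hcon
    push_neg at hcon
    have hTre := congrArg Complex.re hτK
    simp only [Complex.add_re, Complex.add_im, Complex.mul_re, Complex.mul_im,
      Complex.ofReal_re, Complex.ofReal_im, Complex.I_re, Complex.I_im, Complex.neg_re,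
      Complex.neg_im, mul_zero, zero_mul, mul_one, sub_zero, zero_add, add_zero,
      neg_neg, neg_mul] at hTre hcon
    nlinarith [hTre, hh, mul_nonneg (neg_pos.mpr hα).le (neg_nonneg.mpr hcon)]
  have E1 := congrArg Complex.re hβc
  have E2 := congrArg Complex.im hβc
  simp only [Complex.mul_re, Complex.mul_im, Complex.add_re, Complex.add_im,
    Complex.ofReal_re, Complex.ofReal_im, zero_mul, mul_zero, sub_zero, zero_add,
    add_zero] at E1 E2 hKre
  exact core_real μ.re μ.im ν.re ν.im (ε*(-α)) hμre hνre hβpos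
    (by linear_combination E1) (by linear_combination E2) (by nlinarith [hKre])

lemma exists_aux (α ε h η : ℝ) (hα : α < 0) (hε : 0 < ε) (hh : 0 < h) :
    ∃ μ : ℂ, (μ ^ 3 - (ε : ℂ) * ((h : ℂ) + (η : ℂ) * Complex.I) * μ
        - ((h : ℂ) + (η : ℂ) * Complex.I) / (α : ℂ) = 0 ∧ μ.re < 0) := by
  set T : ℂ := (h:ℂ) + (η:ℂ)*Complex.I with hT
  set P : Polynomial ℂ :=
    Polynomial.X^3 - Polynomial.C ((ε:ℂ)*T) * Polynomial.X - Polynomial.C (T/(α:ℂ)) with hP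
  have hdeg : P.degree = 3 := by
    rw [hP]
    compute_degree!
  obtain ⟨r1, hr1⟩ := Complex.exists_root (f := P) (by rw [hdeg]; norm_num)
  have hr1' : r1^3 - (ε:ℂ)*T*r1 - T/(α:ℂ) = 0 := by
    have := hr1
    simp only [hP, Polynomial.IsRoot, Polynomial.eval_sub, Polynomial.eval_mul,
      Polynomial.eval_pow, Polynomial.eval_C, Polynomial.eval_X] at this
    exact this
  obtain ⟨w, hw⟩ := IsAlgClosed.exists_pow_nat_eq (4*((ε:ℂ)*T) - 3*r1^2) (n := 2) (by norm_num)
  have hr2' : ((-r1+w)/2)^3 - (ε:ℂ)*T*((-r1+w)/2) - T/(α:ℂ) = 0 := by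
    linear_combination hr1' + ((w - 3*r1)/8)*hw
  have hr3' : ((-r1-w)/2)^3 - (ε:ℂ)*T*((-r1-w)/2) - T/(α:ℂ) = 0 := by
    linear_combination hr1' + ((-w - 3*r1)/8)*hw
  have hsum : r1.re + ((-r1+w)/2).re + ((-r1-w)/2).re = 0 := by
    have e : r1 + (-r1+w)/2 + (-r1-w)/2 = 0 := by ring
    have := congrArg Complex.re e
    simpa [Complex.add_re] using this
  have h1 := root_re_ne α ε h η hα hε hh r1 hr1'
  have h2 := root_re_ne α ε h η hα hε hh ((-r1+w)/2) hr2'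
  by_cases hc1 : r1.re < 0
  · exact ⟨r1, hr1', hc1⟩
  · by_cases hc2 : ((-r1+w)/2).re < 0
    · exact ⟨(-r1+w)/2, hr2', hc2⟩
    · refine ⟨(-r1-w)/2, hr3', ?_⟩
      push_neg at hc1 hc2
      have g1 : 0 < r1.re := lt_of_le_of_ne hc1 (Ne.symm h1)
      linarith

/-- For `α < 0`, `ε > 0`, `h > 0`, `η ∈ ℝ` and `τ = h + iη`, the characteristic cubic
`λ³ - ετλ - τ/α = 0` has exactly one root with negative real part. -/
theorem stmt2 (α ε h η : ℝ) (hα : α < 0) (hε : 0 < ε) (hh : 0 < h) :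
    ∃! μ : ℂ,
      μ ^ 3 - (ε : ℂ) * ((h : ℂ) + (η : ℂ) * Complex.I) * μ
        - ((h : ℂ) + (η : ℂ) * Complex.I) / (α : ℂ) = 0 ∧ μ.re < 0 := by
  obtain ⟨r, hr, hrre⟩ := exists_aux α ε h η hα hε hh
  refine ⟨r, ⟨hr, hrre⟩, ?_⟩
  rintro y ⟨hy, hyre⟩
  exact uniq_aux α ε h η hα hε hh y r hy hr hyre hrre
end

section
/- Let α < 0, ε > 0 and h > 0 be fixed. For η ∈ ℝ and τ = h + iη, let μ(τ) denote the unique root of λ³ − ετλ − τ/α = 0 with Re μ(τ) < 0. Then there exist positive constants η₀ and C such that for all η with |η| ≥ η₀ one has |Re μ(τ) + √(ε/2)·|η|^{1/2}| ≤ C and | |Im μ(τ)| − √(ε/2)·|η|^{1/2} | ≤ C; i.e. μ(τ) lies within a bounded distance of √(ε/2)(−1 ± i)|η|^{1/2} (with the sign of the imaginary part opposite to that of η). -/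
/-!
With `s` the square root of `ετ` in the right half-plane, the cubic factors as
`μ (μ - s) (μ + s) = τ / α`, and `|s|² = ε|τ|`. A root with `|μ|² ≤ ε|τ|/2` is bounded, so
`(αεμ + 1)(μ² - ετ) = μ²` forces `|αεμ + 1| < 1` once `|τ|` is large; this is impossible when
`Re μ < 0`, because then `Re (αεμ + 1) > 1`. Hence `|μ|` and `|μ - s| ≥ Re s` are both at least
`√(ε|τ|/2)`, so `|μ + s| ≤ 2 / (|α| ε)`. Finally `(Re s)² = ε(|τ| + h)/2` and
`(Im s)² = ε(|τ| - h)/2` differ from `ε|η|/2` by at most `εh`.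
-/

open Complex

lemma abs_sub_le_sqrt_of_abs_sq_sub_le {u t δ : ℝ} (hu : 0 ≤ u) (ht : 0 ≤ t)
    (h : |u ^ 2 - t ^ 2| ≤ δ) : |u - t| ≤ √δ := by
  refine Real.abs_le_sqrt (le_trans ?_ h)
  rcases le_total u t with hut | hut
  · rw [abs_of_nonpos (by nlinarith)]; nlinarith
  · rw [abs_of_nonneg (by nlinarith)]; nlinarith

lemma le_div_of_le_of_mul_eq {x y c d : ℝ} (hc : 0 < c) (hy : 0 ≤ y) (hcx : c ≤ x)
    (hxy : x * y = d) : y ≤ d / c :=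
  (le_div_iff₀ hc).2 (by nlinarith)

namespace Complex

lemma exists_sq_eq_and_re_nonneg (z : ℂ) : ∃ s : ℂ, s ^ 2 = z ∧ 0 ≤ s.re := by
  obtain ⟨s, hs⟩ := IsAlgClosed.exists_pow_nat_eq z two_pos
  rcases le_total 0 s.re with h | h
  · exact ⟨s, hs, h⟩
  · exact ⟨-s, by rw [neg_sq, hs], by simpa using h⟩

lemma sq_re_and_sq_im_of_sq_eq {s z : ℂ} (h : s ^ 2 = z) :
    s.re ^ 2 = (‖z‖ + z.re) / 2 ∧ s.im ^ 2 = (‖z‖ - z.re) / 2 := by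
  have hre : s.re ^ 2 - s.im ^ 2 = z.re := by rw [← h]; simp [sq]
  have hnorm : s.re ^ 2 + s.im ^ 2 = ‖z‖ := by
    rw [← h, norm_pow, Complex.sq_norm, normSq_apply]; ring
  constructor <;> linarith

end Complex

section SquareRoot

variable {ε : ℝ} {τ s : ℂ}

lemma abs_sq_sub_le_of_sq_eq_mul (hε : 0 ≤ ε) (hτ : 0 ≤ τ.re) (hs : s ^ 2 = ε * τ) :
    |s.re ^ 2 - (√(ε / 2) * √|τ.im|) ^ 2| ≤ ε * τ.re ∧
      |s.im ^ 2 - (√(ε / 2) * √|τ.im|) ^ 2| ≤ ε * τ.re := by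
  obtain ⟨hre, him⟩ := sq_re_and_sq_im_of_sq_eq hs
  have hnorm : ‖(ε : ℂ) * τ‖ = ε * ‖τ‖ := by rw [norm_mul, norm_real, Real.norm_of_nonneg hε]
  have hre' : ((ε : ℂ) * τ).re = ε * τ.re := by simp
  have ht : (√(ε / 2) * √|τ.im|) ^ 2 = ε / 2 * |τ.im| := by
    rw [mul_pow, Real.sq_sqrt (by positivity), Real.sq_sqrt (abs_nonneg _)]
  have hlow := abs_im_le_norm τ
  have hup : ‖τ‖ ≤ τ.re + |τ.im| := by simpa [abs_of_nonneg hτ] using norm_le_abs_re_add_abs_im τ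
  rw [hre, him, hnorm, hre', ht]
  constructor <;> exact abs_le.2 ⟨by nlinarith, by nlinarith⟩

lemma abs_re_sub_le_of_sq_eq_mul (hε : 0 ≤ ε) (hτ : 0 ≤ τ.re) (hs : s ^ 2 = ε * τ)
    (hs_re : 0 ≤ s.re) : abs (s.re - √(ε / 2) * √|τ.im|) ≤ √(ε * τ.re) :=
  abs_sub_le_sqrt_of_abs_sq_sub_le hs_re (by positivity)
    (abs_sq_sub_le_of_sq_eq_mul hε hτ hs).1

lemma abs_abs_im_sub_le_of_sq_eq_mul (hε : 0 ≤ ε) (hτ : 0 ≤ τ.re) (hs : s ^ 2 = ε * τ) :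
    abs (|s.im| - √(ε / 2) * √|τ.im|) ≤ √(ε * τ.re) :=
  abs_sub_le_sqrt_of_abs_sq_sub_le (abs_nonneg _) (by positivity)
    (by rw [sq_abs]; exact (abs_sq_sub_le_of_sq_eq_mul hε hτ hs).2)

end SquareRoot

section Cubic

variable {α ε : ℝ} {τ μ s : ℂ}

lemma norm_div_ofReal_of_neg (hα : α < 0) : ‖τ / α‖ = ‖τ‖ / -α := by
  rw [norm_div, norm_real, Real.norm_of_nonpos hα.le]

lemma lt_norm_sq_of_cubic (hα : α < 0) (hε : 0 < ε) (hμ : μ ^ 3 - ε * τ * μ - τ / α = 0)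
    (hneg : μ.re < 0) (hτ : 2 * (2 / (-α * ε)) ^ 2 < ε * ‖τ‖) : ε * ‖τ‖ / 2 < ‖μ‖ ^ 2 := by
  by_contra! hsmall
  set K := 2 / (-α * ε)
  have hτpos : 0 < ‖τ‖ := pos_of_mul_pos_right ((by positivity : 0 ≤ 2 * K ^ 2).trans_lt hτ) hε.le
  have hfac : μ * (μ ^ 2 - ε * τ) = τ / α := by linear_combination hμ
  have hlow : ε * ‖τ‖ / 2 ≤ ‖μ ^ 2 - ε * τ‖ := by
    have := norm_sub_norm_le ((ε : ℂ) * τ) (μ ^ 2)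
    rw [norm_sub_rev, norm_mul, norm_real, Real.norm_of_nonneg hε.le, norm_pow] at this
    linarith
  have hμK : ‖μ‖ ≤ K := by
    have := le_div_of_le_of_mul_eq (by positivity) (norm_nonneg μ) hlow
      (by rw [mul_comm, ← norm_mul, hfac, norm_div_ofReal_of_neg hα])
    calc ‖μ‖ ≤ ‖τ‖ / -α / (ε * ‖τ‖ / 2) := this
      _ = K := by simp only [K]; field_simp
  have hz : (α * ε * μ + 1) * (μ ^ 2 - ε * τ) = μ ^ 2 := by
    have hατ : (α : ℂ) * (τ / α) = τ := mul_div_cancel₀ _ (by exact_mod_cast hα.ne)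
    linear_combination (α * ε : ℂ) * hfac + (ε : ℂ) * hατ
  have hz_norm : ‖(α * ε * μ + 1 : ℂ)‖ < 1 :=
    calc ‖(α * ε * μ + 1 : ℂ)‖ ≤ ‖μ‖ ^ 2 / (ε * ‖τ‖ / 2) :=
          le_div_of_le_of_mul_eq (by positivity) (norm_nonneg _) hlow
            (by rw [mul_comm, ← norm_mul, hz, norm_pow])
      _ ≤ K ^ 2 / (ε * ‖τ‖ / 2) := by gcongr
      _ < 1 := (div_lt_one (by positivity)).2 (by linarith)
  have hz_re : 1 < (α * ε * μ + 1 : ℂ).re := by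
    have : 0 < α * ε * μ.re := mul_pos_of_neg_of_neg (mul_neg_of_neg_of_pos hα hε) hneg
    simpa using this
  linarith [re_le_norm (α * ε * μ + 1 : ℂ)]

lemma norm_add_le_of_cubic (hα : α < 0) (hε : 0 < ε) (hτre : 0 ≤ τ.re)
    (hs : s ^ 2 = ε * τ) (hs_re : 0 ≤ s.re) (hμ : μ ^ 3 - ε * τ * μ - τ / α = 0)
    (hneg : μ.re < 0) (hτ : 2 * (2 / (-α * ε)) ^ 2 < ε * ‖τ‖) :
    ‖μ + s‖ ≤ 2 / (-α * ε) := by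
  have hτpos : 0 < ‖τ‖ := pos_of_mul_pos_right ((by positivity : (0 : ℝ) ≤ _).trans_lt hτ) hε.le
  have hfac : μ * (μ - s) * (μ + s) = τ / α := by linear_combination hμ - μ * hs
  have hμ_ge : √(ε * ‖τ‖ / 2) ≤ ‖μ‖ :=
    (Real.sqrt_le_left (norm_nonneg _)).2 (lt_norm_sq_of_cubic hα hε hμ hneg hτ).le
  have hs_ge : √(ε * ‖τ‖ / 2) ≤ s.re := by
    refine (Real.sqrt_le_left hs_re).2 ?_
    rw [(sq_re_and_sq_im_of_sq_eq hs).1, norm_mul, norm_real, Real.norm_of_nonneg hε.le]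
    have : ((ε : ℂ) * τ).re = ε * τ.re := by simp
    nlinarith
  have hsub_ge : s.re ≤ ‖μ - s‖ := by
    have := re_le_norm (s - μ)
    rw [sub_re, norm_sub_rev] at this
    linarith
  have hprod : ε * ‖τ‖ / 2 ≤ ‖μ‖ * ‖μ - s‖ := by
    rw [← Real.mul_self_sqrt (by positivity : 0 ≤ ε * ‖τ‖ / 2)]
    exact mul_le_mul hμ_ge (hs_ge.trans hsub_ge) (Real.sqrt_nonneg _) (norm_nonneg _)
  calc ‖μ + s‖ ≤ ‖τ‖ / -α / (ε * ‖τ‖ / 2) :=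
        le_div_of_le_of_mul_eq (by positivity) (norm_nonneg _) hprod
          (by rw [← norm_mul, ← norm_mul, hfac, norm_div_ofReal_of_neg hα])
    _ = 2 / (-α * ε) := by field_simp

end Cubic

section Perturbation

variable {μ s : ℂ} {t K δ : ℝ}

lemma abs_re_add_le_of_norm_add_le (hμs : ‖μ + s‖ ≤ K) (hs : abs (s.re - t) ≤ δ) :
    abs (μ.re + t) ≤ K + δ :=
  calc abs (μ.re + t) = abs ((μ + s).re - (s.re - t)) := by rw [add_re]; ring_nf
    _ ≤ ‖μ + s‖ + δ := (abs_sub _ _).trans (add_le_add (abs_re_le_norm _) hs)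
    _ ≤ K + δ := by linarith

lemma abs_abs_im_sub_le_of_norm_add_le (hμs : ‖μ + s‖ ≤ K) (hs : abs (|s.im| - t) ≤ δ) :
    abs (|μ.im| - t) ≤ K + δ :=
  calc abs (|μ.im| - t) ≤ abs (|μ.im| - |-s.im|) + abs (|s.im| - t) := by
        rw [abs_neg]; exact abs_sub_le _ _ _
    _ ≤ ‖μ + s‖ + δ := by
        refine add_le_add ((abs_abs_sub_abs_le_abs_sub _ _).trans ?_) hs
        simpa using abs_im_le_norm (μ + s)
    _ ≤ K + δ := by linarith

end Perturbation

/-- Asymptotics of the root `μ(τ)` (the unique root of `λ³ - ετλ - τ/α = 0` with negative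
real part, `τ = h + iη`): for `|η|` large, `μ(τ)` lies within a bounded distance of
`√(ε/2)(-1 ± i)|η|^{1/2}`. -/
theorem stmt3 (α ε h : ℝ) (hα : α < 0) (hε : 0 < ε) (hh : 0 < h)
    (μ : ℝ → ℂ)
    (hroot : ∀ η : ℝ,
      (μ η) ^ 3 - (ε : ℂ) * ((h : ℂ) + (η : ℂ) * Complex.I) * (μ η)
        - ((h : ℂ) + (η : ℂ) * Complex.I) / (α : ℂ) = 0)
    (hneg : ∀ η : ℝ, (μ η).re < 0) :
    ∃ η₀ C : ℝ, 0 < η₀ ∧ 0 < C ∧ ∀ η : ℝ, η₀ ≤ |η| →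
      abs ((μ η).re + Real.sqrt (ε / 2) * Real.sqrt |η|) ≤ C ∧
      abs (|(μ η).im| - Real.sqrt (ε / 2) * Real.sqrt |η|) ≤ C := by
  set K := 2 / (-α * ε)
  have hK : 0 < K := div_pos two_pos (mul_pos (neg_pos.2 hα) hε)
  refine ⟨2 * K ^ 2 / ε + 1, K + √(ε * h), by positivity, by positivity, fun η hη => ?_⟩
  set τ : ℂ := h + η * I
  have hτre : τ.re = h := by simp [τ]
  have hτim : τ.im = η := by simp [τ]
  obtain ⟨s, hs, hs_re⟩ := exists_sq_eq_and_re_nonneg (ε * τ)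
  have hτ : 2 * K ^ 2 < ε * ‖τ‖ := by
    have := mul_le_mul_of_nonneg_left (hη.trans (hτim ▸ abs_im_le_norm τ)) hε.le
    rw [mul_add, mul_div_cancel₀ _ hε.ne'] at this
    linarith
  have hτre_nonneg : 0 ≤ τ.re := hτre ▸ hh.le
  have hμs := norm_add_le_of_cubic hα hε hτre_nonneg hs hs_re (hroot η) (hneg η) hτ
  have hre := abs_re_sub_le_of_sq_eq_mul hε.le hτre_nonneg hs hs_re
  have him := abs_abs_im_sub_le_of_sq_eq_mul hε.le hτre_nonneg hs
  rw [hτre, hτim] at hre him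
  exact ⟨abs_re_add_le_of_norm_add_le hμs hre, abs_abs_im_sub_le_of_norm_add_le hμs him⟩
end

section
/- Let α < 0, ε > 0 and h > 0 be fixed. For η ∈ ℝ and τ = h + iη, let μ(τ) denote the unique root of λ³ − ετλ − τ/α = 0 with Re μ(τ) < 0. Then there exist positive constants η₀ and C such that for all η with |η| ≥ η₀ one has |τ| ≤ C·|μ(τ)|². -/
/-! Writing the cubic as `μ³ = τ (ε μ + 1/α)`, the factor `ε μ + 1/α` is `ε μ` shifted by the
negative real number `1/α`; since `Re μ < 0` the shift only moves it further from the origin, so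
`|μ|³ ≥ ε |τ| |μ|`, i.e. `|τ| ≤ ε⁻¹ |μ|²` for every `η`. -/

namespace Complex

theorem norm_le_norm_add_ofReal_of_re_nonpos {z : ℂ} {r : ℝ} (hz : z.re ≤ 0) (hr : r ≤ 0) :
    ‖z‖ ≤ ‖z + r‖ := by
  rw [← sq_le_sq₀ (norm_nonneg _) (norm_nonneg _), Complex.sq_norm, Complex.sq_norm, normSq_apply, normSq_apply]
  simp only [add_re, add_im, ofReal_re, ofReal_im, add_zero]
  nlinarith

theorem norm_le_inv_mul_sq_of_cube_sub_eq_zero {m τ : ℂ} {ε c : ℝ} (hε : 0 < ε) (hc : c ≤ 0)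
    (hm : m.re < 0) (hcubic : m ^ 3 - ε * τ * m - τ * c = 0) :
    ‖τ‖ ≤ ε⁻¹ * ‖m‖ ^ 2 := by
  have hm₀ : 0 < ‖m‖ := norm_pos_iff.2 fun h ↦ by simp [h] at hm
  have hfactor : ε * ‖m‖ ≤ ‖(ε : ℂ) * m + c‖ := by
    have := norm_le_norm_add_ofReal_of_re_nonpos (z := ε * m) (r := c)
      (by simpa using mul_nonpos_of_nonneg_of_nonpos hε.le hm.le) hc
    rwa [norm_mul, norm_real, Real.norm_of_nonneg hε.le] at this
  have hnorm : ‖m‖ ^ 3 = ‖τ‖ * ‖(ε : ℂ) * m + c‖ := by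
    rw [← norm_pow, ← norm_mul]
    congr 1
    linear_combination hcubic
  rw [inv_mul_eq_div, le_div_iff₀ hε]
  nlinarith [mul_le_mul_of_nonneg_left hfactor (norm_nonneg τ)]

end Complex

theorem stmt4_general (α ε h : ℝ) (hα : α < 0) (hε : 0 < ε)
    (μ : ℝ → ℂ)
    (hroot : ∀ η : ℝ,
      (μ η) ^ 3 - (ε : ℂ) * ((h : ℂ) + (η : ℂ) * Complex.I) * (μ η)
        - ((h : ℂ) + (η : ℂ) * Complex.I) / (α : ℂ) = 0)
    (hneg : ∀ η : ℝ, (μ η).re < 0) :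
    ∃ η₀ C : ℝ, 0 < η₀ ∧ 0 < C ∧ ∀ η : ℝ, η₀ ≤ |η| →
      ‖(h : ℂ) + (η : ℂ) * Complex.I‖ ≤ C * ‖μ η‖ ^ 2 := by
  refine ⟨1, ε⁻¹, one_pos, inv_pos.2 hε, fun η _ ↦ ?_⟩
  refine Complex.norm_le_inv_mul_sq_of_cube_sub_eq_zero hε (inv_nonpos.2 hα.le) (hneg η) ?_
  rw [← hroot η, Complex.ofReal_inv, div_eq_mul_inv]

/-- For the root `μ(τ)` of `λ³ - ετλ - τ/α = 0` with negative real part (`τ = h + iη`),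
one has `|τ| ≤ C·|μ(τ)|²` for `|η|` large. -/
theorem stmt4 (α ε h : ℝ) (hα : α < 0) (hε : 0 < ε) (hh : 0 < h)
    (μ : ℝ → ℂ)
    (hroot : ∀ η : ℝ,
      (μ η) ^ 3 - (ε : ℂ) * ((h : ℂ) + (η : ℂ) * Complex.I) * (μ η)
        - ((h : ℂ) + (η : ℂ) * Complex.I) / (α : ℂ) = 0)
    (hneg : ∀ η : ℝ, (μ η).re < 0) :
    ∃ η₀ C : ℝ, 0 < η₀ ∧ 0 < C ∧ ∀ η : ℝ, η₀ ≤ |η| →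
      ‖(h : ℂ) + (η : ℂ) * Complex.I‖ ≤ C * ‖μ η‖ ^ 2 :=
  stmt4_general α ε h hα hε μ hroot hneg
end

section
/- Let m be a positive integer and let u : [0,∞) → ℝ^m be three times continuously differentiable with u', u'', u''' square integrable on (0,∞), u'(0) = 0, and u'(x)·u''(x) → 0 as x → ∞. Then ∫₀^∞ |u''(x)|² dx ≤ (∫₀^∞ |u'(x)|² dx)^{1/2} · (∫₀^∞ |u'''(x)|² dx)^{1/2}. -/
/-!
Since `u'(0) = 0` and `u'·u'' → 0` at infinity, integrating `(u'·u'')' = |u''|² + u'·u'''`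
over the half line gives `‖u''‖² = -∫ u'·u'''`; Cauchy–Schwarz in `L²` bounds the right-hand
side by `‖u'‖ ‖u'''‖`.
-/

open MeasureTheory Filter Set

namespace MeasureTheory.MemLp

variable {α E : Type*} [MeasurableSpace α] {μ : Measure α}
  [NormedAddCommGroup E] [InnerProductSpace ℝ E] {f g : α → E}

theorem inner_toLp_ae_eq (hf : MemLp f 2 μ) (hg : MemLp g 2 μ) :
    (fun x => inner ℝ (hf.toLp f x) (hg.toLp g x)) =ᵐ[μ] fun x => inner ℝ (f x) (g x) := by
  filter_upwards [hf.coeFn_toLp, hg.coeFn_toLp] with x hfx hgx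
  rw [hfx, hgx]

theorem integrable_inner (hf : MemLp f 2 μ) (hg : MemLp g 2 μ) :
    Integrable (fun x => inner ℝ (f x) (g x)) μ :=
  (L2.integrable_inner (𝕜 := ℝ) (hf.toLp f) (hg.toLp g)).congr (hf.inner_toLp_ae_eq hg)

theorem integral_inner_eq_inner_toLp (hf : MemLp f 2 μ) (hg : MemLp g 2 μ) :
    ∫ x, inner ℝ (f x) (g x) ∂μ = inner ℝ (hf.toLp f) (hg.toLp g) := by
  rw [L2.inner_def]
  exact (integral_congr_ae (hf.inner_toLp_ae_eq hg)).symm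

theorem norm_toLp_two_eq_sqrt (hf : MemLp f 2 μ) :
    ‖hf.toLp f‖ = Real.sqrt (∫ x, ‖f x‖ ^ 2 ∂μ) := by
  rw [← Real.sqrt_sq (norm_nonneg _), ← real_inner_self_eq_norm_sq,
    ← hf.integral_inner_eq_inner_toLp hf]
  simp_rw [real_inner_self_eq_norm_sq]

theorem abs_integral_inner_le_sqrt_mul_sqrt (hf : MemLp f 2 μ) (hg : MemLp g 2 μ) :
    |∫ x, inner ℝ (f x) (g x) ∂μ|
      ≤ Real.sqrt (∫ x, ‖f x‖ ^ 2 ∂μ) * Real.sqrt (∫ x, ‖g x‖ ^ 2 ∂μ) := by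
  rw [hf.integral_inner_eq_inner_toLp hg, ← hf.norm_toLp_two_eq_sqrt,
    ← hg.norm_toLp_two_eq_sqrt]
  exact abs_real_inner_le_norm _ _

end MeasureTheory.MemLp

theorem integral_Ioi_inner_deriv_eq_deriv_inner {E : Type*} [NormedAddCommGroup E]
    [InnerProductSpace ℝ E] {f f' g g' : ℝ → E} {a L : ℝ}
    (hf : ∀ x ∈ Ioi a, HasDerivAt f (f' x) x) (hg : ∀ x ∈ Ioi a, HasDerivAt g (g' x) x)
    (hfa : ContinuousWithinAt f (Ici a) a) (hga : ContinuousWithinAt g (Ici a) a)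
    (hfg' : IntegrableOn (fun x => inner ℝ (f x) (g' x)) (Ioi a))
    (hf'g : IntegrableOn (fun x => inner ℝ (f' x) (g x)) (Ioi a))
    (h_infty : Tendsto (fun x => inner ℝ (f x) (g x)) atTop (nhds L)) :
    ∫ x in Ioi a, inner ℝ (f x) (g' x)
      = L - inner ℝ (f a) (g a) - ∫ x in Ioi a, inner ℝ (f' x) (g x) := by
  rw [eq_sub_iff_add_eq, ← integral_add hfg' hf'g]
  exact integral_Ioi_of_hasDerivAt_of_tendsto (hfa.inner hga)
    (fun x hx => (hf x hx).inner ℝ (hg x hx)) (hfg'.add hf'g) h_infty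

theorem aestronglyMeasurable_restrict_Ioi_of_hasDerivAt {F : Type*} [NormedAddCommGroup F]
    [NormedSpace ℝ F] [CompleteSpace F] {f f' : ℝ → F} {a : ℝ}
    (hf : ∀ x ∈ Ioi a, HasDerivAt f (f' x) x) :
    AEStronglyMeasurable f' (volume.restrict (Ioi a)) :=
  (aestronglyMeasurable_deriv f _).congr <|
    (ae_restrict_mem measurableSet_Ioi).mono fun x hx => (hf x hx).deriv

theorem stmt14_general (m : ℕ)
    (u1 u2 u3 : ℝ → EuclideanSpace ℝ (Fin m))
    (hd2 : ∀ x ∈ Ici (0 : ℝ), HasDerivWithinAt u1 (u2 x) (Ici 0) x)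
    (hd3 : ∀ x ∈ Ici (0 : ℝ), HasDerivWithinAt u2 (u3 x) (Ici 0) x)
    (h1 : IntegrableOn (fun x => ‖u1 x‖ ^ 2) (Ioi 0))
    (h2 : IntegrableOn (fun x => ‖u2 x‖ ^ 2) (Ioi 0))
    (h3 : IntegrableOn (fun x => ‖u3 x‖ ^ 2) (Ioi 0))
    (hbc : u1 0 = 0)
    (hdec : Tendsto (fun x => (inner ℝ (u1 x) (u2 x) : ℝ)) atTop (nhds 0)) :
    (∫ x in Ioi (0 : ℝ), ‖u2 x‖ ^ 2)
      ≤ Real.sqrt (∫ x in Ioi (0 : ℝ), ‖u1 x‖ ^ 2)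
        * Real.sqrt (∫ x in Ioi (0 : ℝ), ‖u3 x‖ ^ 2) := by
  have hd2' : ∀ x ∈ Ioi (0 : ℝ), HasDerivAt u1 (u2 x) x := fun x hx =>
    (hd2 x hx.out.le).hasDerivAt (Ici_mem_nhds hx)
  have hd3' : ∀ x ∈ Ioi (0 : ℝ), HasDerivAt u2 (u3 x) x := fun x hx =>
    (hd3 x hx.out.le).hasDerivAt (Ici_mem_nhds hx)
  have hc1 : ContinuousOn u1 (Ici 0) := fun x hx => (hd2 x hx).continuousWithinAt
  have hu1 : MemLp u1 2 (volume.restrict (Ioi 0)) :=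
    (memLp_two_iff_integrable_sq_norm
      ((hc1.mono Ioi_subset_Ici_self).aestronglyMeasurable measurableSet_Ioi)).2 h1
  have hu3 : MemLp u3 2 (volume.restrict (Ioi 0)) :=
    (memLp_two_iff_integrable_sq_norm (aestronglyMeasurable_restrict_Ioi_of_hasDerivAt hd3')).2 h3
  have hparts : ∫ x in Ioi (0 : ℝ), inner ℝ (u1 x) (u3 x) = -∫ x in Ioi (0 : ℝ), ‖u2 x‖ ^ 2 := by
    have h2' : IntegrableOn (fun x => inner ℝ (u2 x) (u2 x)) (Ioi 0) := by
      simpa only [real_inner_self_eq_norm_sq] using h2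
    simpa [hbc, real_inner_self_eq_norm_sq] using
      integral_Ioi_inner_deriv_eq_deriv_inner hd2' hd3' (hd2 0 self_mem_Ici).continuousWithinAt
        (hd3 0 self_mem_Ici).continuousWithinAt (hu1.integrable_inner hu3) h2' hdec
  calc (∫ x in Ioi (0 : ℝ), ‖u2 x‖ ^ 2) = -∫ x in Ioi (0 : ℝ), inner ℝ (u1 x) (u3 x) := by
        rw [hparts, neg_neg]
    _ ≤ |∫ x in Ioi (0 : ℝ), inner ℝ (u1 x) (u3 x)| := neg_le_abs _
    _ ≤ _ := hu1.abs_integral_inner_le_sqrt_mul_sqrt hu3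

/-- Interpolation inequality on the half line: for `u : [0,∞) → ℝᵐ` three times
continuously differentiable with `u', u'', u'''` square integrable, `u'(0) = 0` and
`u'(x)·u''(x) → 0` as `x → ∞`, one has `‖u''‖² ≤ ‖u'‖·‖u'''‖` (squared `L²` norms). -/
theorem stmt14 (m : ℕ) (hm : 0 < m)
    (u u1 u2 u3 : ℝ → EuclideanSpace ℝ (Fin m))
    (hd1 : ∀ x ∈ Ici (0 : ℝ), HasDerivWithinAt u (u1 x) (Ici 0) x)
    (hd2 : ∀ x ∈ Ici (0 : ℝ), HasDerivWithinAt u1 (u2 x) (Ici 0) x)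
    (hd3 : ∀ x ∈ Ici (0 : ℝ), HasDerivWithinAt u2 (u3 x) (Ici 0) x)
    (hc3 : ContinuousOn u3 (Ici 0))
    (h1 : IntegrableOn (fun x => ‖u1 x‖ ^ 2) (Ioi 0))
    (h2 : IntegrableOn (fun x => ‖u2 x‖ ^ 2) (Ioi 0))
    (h3 : IntegrableOn (fun x => ‖u3 x‖ ^ 2) (Ioi 0))
    (hbc : u1 0 = 0)
    (hdec : Tendsto (fun x => (inner ℝ (u1 x) (u2 x) : ℝ)) atTop (nhds 0)) :
    (∫ x in Ioi (0 : ℝ), ‖u2 x‖ ^ 2)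
      ≤ Real.sqrt (∫ x in Ioi (0 : ℝ), ‖u1 x‖ ^ 2)
        * Real.sqrt (∫ x in Ioi (0 : ℝ), ‖u3 x‖ ^ 2) :=
  stmt14_general m u1 u2 u3 hd2 hd3 h1 h2 h3 hbc hdec
end

section
/- Let α > 0, δ > 0, T > 0 and let m be a positive integer. Let B₀, B₁, B₂ : [0,∞) × [0,T] → (m × m real matrices) be continuously differentiable, bounded together with their first derivatives, and assume the strong ellipticity condition ξ·(B₀(x,t) + B₀(x,t)ᵀ)ξ ≥ δ|ξ|² for all (x,t) and all ξ ∈ ℝ^m. Let u : [0,∞) × [0,T] → ℝ^m be smooth, and suppose that for each t ∈ [0,T] the functions x ↦ ∂ₓʲu(x,t) for j = 0,1,2,3 and x ↦ ∂ₜu(x,t), ∂ₜ∂ₓu(x,t) are square integrable on (0,∞) and tend to 0 as x → ∞, locally uniformly in t so that the energies ‖∂ₓʲu(·,t)‖²_{L²(0,∞)} (j = 0,1,2) are differentiable in t with derivative obtained by differentiating under the integral. If u satisfies u_t = α u_{xxx} + B₀ u_{xx} + B₁ u_x + B₂ u on (0,∞) × (0,T), u(x,0) = 0 for all x ≥ 0,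 and both boundary conditions u(0,t) = 0 and ∂ₓu(0,t) = 0 for all t ∈ [0,T], then u is identically zero on [0,∞) × [0,T]. -/
/-!
Energy method for `E(t) = ∫₀^∞ ‖u(x, t)‖² dx`, whose derivative is `2 ∫₀^∞ ⟪u, u_t⟫`. The
dispersive term `⟪u, u_xxx⟫` is the `x`-derivative of `⟪u, u_xx⟫ - ‖u_x‖² / 2`, so it integrates to
zero because both `u` and `u_x` vanish at `x = 0`. Integrating `⟪u, B₀ u_xx⟫` by parts (using
`u(0, t) = 0`) yields `-⟪u_x, B₀ u_x⟫ - ⟪u, ∂ₓB₀ u_x⟫`; by ellipticity the first term is at most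
`-δ ‖u_x‖² / 2`, which absorbs the cross terms `⟪u, ∂ₓB₀ u_x⟫` and `⟪u, B₁ u_x⟫`. Hence
`E' ≤ K E` with `K` depending only on `δ` and the bounds of the coefficients, and Grönwall's
inequality with `E(0) = 0` gives `E ≡ 0`, so `u = 0` by continuity.
-/

open MeasureTheory Filter Set Topology
open scoped RealInnerProductSpace

section L2

variable {X E : Type*} [MeasurableSpace X] {μ : Measure X}
  [NormedAddCommGroup E] [InnerProductSpace ℝ E]

theorem MeasureTheory.AEStronglyMeasurable.clm_apply {F G : Type*} [NormedAddCommGroup F]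
    [NormedSpace ℝ F] [NormedAddCommGroup G] [NormedSpace ℝ G] {A : X → F →L[ℝ] G} {g : X → F}
    (hA : AEStronglyMeasurable A μ) (hg : AEStronglyMeasurable g μ) :
    AEStronglyMeasurable (fun x => A x (g x)) μ :=
  (ContinuousLinearMap.id ℝ (F →L[ℝ] G)).aestronglyMeasurable_comp₂ hA hg

theorem integrable_inner_of_integrable_norm_sq {f g : X → E}
    (hf : AEStronglyMeasurable f μ) (hg : AEStronglyMeasurable g μ)
    (hf2 : Integrable (fun x => ‖f x‖ ^ 2) μ) (hg2 : Integrable (fun x => ‖g x‖ ^ 2) μ) :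
    Integrable (fun x => ⟪f x, g x⟫) μ := by
  have hf' := (memLp_two_iff_integrable_sq_norm hf).2 hf2
  have hg' := (memLp_two_iff_integrable_sq_norm hg).2 hg2
  refine (L2.integrable_inner (𝕜 := ℝ) (hf'.toLp f) (hg'.toLp g)).congr ?_
  filter_upwards [hf'.coeFn_toLp, hg'.coeFn_toLp] with x h1 h2
  rw [h1, h2]

theorem integrable_norm_clm_apply_sq {A : X → E →L[ℝ] E} {g : X → E} {M : ℝ}
    (hA : AEStronglyMeasurable A μ) (hg : AEStronglyMeasurable g μ)
    (hAM : ∀ᵐ x ∂μ, ‖A x‖ ≤ M) (hg2 : Integrable (fun x => ‖g x‖ ^ 2) μ) :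
    Integrable (fun x => ‖A x (g x)‖ ^ 2) μ := by
  refine (hg2.const_mul (M ^ 2)).mono' ((hA.clm_apply hg).norm.pow 2) ?_
  filter_upwards [hAM] with x hx
  rw [norm_pow, norm_norm, ← mul_pow]
  exact pow_le_pow_left₀ (norm_nonneg _) ((A x).le_of_opNorm_le hx (g x)) 2

theorem integrable_inner_clm_apply {A : X → E →L[ℝ] E} {f g : X → E} {M : ℝ}
    (hf : AEStronglyMeasurable f μ) (hA : AEStronglyMeasurable A μ)
    (hg : AEStronglyMeasurable g μ) (hAM : ∀ᵐ x ∂μ, ‖A x‖ ≤ M)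
    (hf2 : Integrable (fun x => ‖f x‖ ^ 2) μ) (hg2 : Integrable (fun x => ‖g x‖ ^ 2) μ) :
    Integrable (fun x => ⟪f x, A x (g x)⟫) μ :=
  integrable_inner_of_integrable_norm_sq hf (hA.clm_apply hg) hf2
    (integrable_norm_clm_apply_sq hA hg hAM hg2)

end L2

section Ici

variable {F : Type*} [NormedAddCommGroup F] [NormedSpace ℝ F] {f f' : ℝ → F} {a : ℝ}

theorem aestronglyMeasurable_Ioi_of_hasDerivWithinAt
    (hf : ∀ x ∈ Ici a, HasDerivWithinAt f (f' x) (Ici a) x) :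
    AEStronglyMeasurable f (volume.restrict (Ioi a)) :=
  (ContinuousOn.mono (fun x hx => (hf x hx).continuousWithinAt) Ioi_subset_Ici_self
    ).aestronglyMeasurable measurableSet_Ioi

theorem aestronglyMeasurable_deriv_Ioi_of_hasDerivWithinAt [CompleteSpace F]
    (hf : ∀ x ∈ Ici a, HasDerivWithinAt f (f' x) (Ici a) x) :
    AEStronglyMeasurable f' (volume.restrict (Ioi a)) :=
  (aestronglyMeasurable_deriv f _).congr <| (ae_restrict_iff' measurableSet_Ioi).2 <|
    ae_of_all _ fun x hx => ((hf x (mem_Ici.2 hx.out.le)).hasDerivAt (Ici_mem_nhds hx)).deriv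

theorem integral_Ioi_of_hasDerivWithinAt_Ici [CompleteSpace F] {m : F}
    (hf : ∀ x ∈ Ici a, HasDerivWithinAt f (f' x) (Ici a) x) (hf' : IntegrableOn f' (Ioi a))
    (hlim : Tendsto f atTop (𝓝 m)) : ∫ x in Ioi a, f' x = m - f a :=
  integral_Ioi_of_hasDerivAt_of_tendsto (hf a self_mem_Ici).continuousWithinAt
    (fun x hx => (hf x (mem_Ici.2 hx.out.le)).hasDerivAt (Ici_mem_nhds hx)) hf' hlim

end Ici

theorem le_zero_of_hasDerivWithinAt_le_mul_self {f f' : ℝ → ℝ} {K a b : ℝ}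
    (hf : ∀ t ∈ Icc a b, HasDerivWithinAt f (f' t) (Icc a b) t) (ha : f a ≤ 0)
    (bound : ∀ t ∈ Ico a b, f' t ≤ K * f t) : ∀ t ∈ Icc a b, f t ≤ 0 := by
  intro t ht
  have hf' : ∀ t ∈ Ico a b, HasDerivWithinAt f (f' t) (Ici t) t := fun t ht =>
    (hf t (Ico_subset_Icc_self ht)).mono_of_mem_nhdsWithin (Icc_mem_nhdsGE_of_mem ht)
  simpa only [gronwallBound_ε0_δ0] using le_gronwallBound_of_liminf_deriv_right_le (ε := 0)
    (fun t ht => (hf t ht).continuousWithinAt)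
    (fun t ht _ hr => (hf' t ht).liminf_right_slope_le hr) ha
    (by simpa only [add_zero] using bound) t ht

theorem eqOn_zero_of_integral_norm_sq_le_zero {E : Type*} [NormedAddCommGroup E] {v : ℝ → E}
    {U : Set ℝ} (hU : IsOpen U) (hv : ContinuousOn v U)
    (hint : IntegrableOn (fun x => ‖v x‖ ^ 2) U) (h : ∫ x in U, ‖v x‖ ^ 2 ≤ 0) : EqOn v 0 U := by
  have hzero := (integral_eq_zero_iff_of_nonneg (fun x => by positivity) hint).1
    (h.antisymm (integral_nonneg fun x => by positivity))
  refine Measure.eqOn_open_of_ae_eq (μ := volume) ?_ hU hv continuousOn_const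
  filter_upwards [hzero] with x hx
  simpa using hx

theorem exists_hasDerivWithinAt_comp_prodMk_le {F : Type*} [NormedAddCommGroup F]
    [NormedSpace ℝ F] {f : ℝ × ℝ → F} {s u : Set ℝ} {t M : ℝ}
    (hf : DifferentiableOn ℝ f (s ×ˢ u)) (hM : ∀ p ∈ s ×ˢ u, ‖fderivWithin ℝ f (s ×ˢ u) p‖ ≤ M)
    (ht : t ∈ u) :
    ∃ f' : ℝ → F, ∀ x ∈ s, HasDerivWithinAt (fun x => f (x, t)) (f' x) s x ∧ ‖f' x‖ ≤ M := by
  refine ⟨fun x => fderivWithin ℝ f (s ×ˢ u) (x, t) (1, 0), fun x hx => ⟨?_, ?_⟩⟩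
  · exact (hf (x, t) (mk_mem_prod hx ht)).hasFDerivWithinAt.comp_hasDerivWithinAt x
      ((hasDerivWithinAt_id x s).prodMk (hasDerivWithinAt_const x s t))
      fun _ hy => mk_mem_prod hy ht
  · simpa using (fderivWithin ℝ f (s ×ˢ u) (x, t)).le_of_opNorm_le
      (hM _ (mk_mem_prod hx ht)) (1, 0)

section HalfLine

variable {E : Type*} [NormedAddCommGroup E] [InnerProductSpace ℝ E]

theorem two_mul_inner_lower_order_le {a b : E} {A₀ A₀' A₁ A₂ : E →L[ℝ] E} {δ M : ℝ}
    (hδ : 0 < δ) (hell : δ * ‖b‖ ^ 2 ≤ ⟪b, A₀ b⟫ + ⟪A₀ b, b⟫)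
    (h₀' : ‖A₀'‖ ≤ M) (h₁ : ‖A₁‖ ≤ M) (h₂ : ‖A₂‖ ≤ M) :
    2 * (⟪a, A₁ b⟫ + ⟪a, A₂ a⟫ - (⟪b, A₀ b⟫ + ⟪a, A₀' b⟫)) ≤
      (4 * M ^ 2 / δ + 2 * M) * ‖a‖ ^ 2 := by
  have inner_le : ∀ (A : E →L[ℝ] E) (c : E), ‖A‖ ≤ M → |⟪a, A c⟫| ≤ M * (‖a‖ * ‖c‖) :=
    fun A c hA => (abs_real_inner_le_norm _ _).trans <| by
      rw [mul_left_comm]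
      exact mul_le_mul_of_nonneg_left (A.le_of_opNorm_le hA c) (norm_nonneg a)
  have hM : 0 ≤ M := (norm_nonneg _).trans h₁
  -- Young's inequality absorbs the cross terms into the ellipticity of `A₀`.
  have young : 4 * M * (‖a‖ * ‖b‖) - δ * ‖b‖ ^ 2 ≤ 4 * M ^ 2 / δ * ‖a‖ ^ 2 := by
    rw [div_mul_eq_mul_div, le_div_iff₀ hδ]
    nlinarith [sq_nonneg (2 * M * ‖a‖ - δ * ‖b‖)]
  rw [real_inner_comm b] at hell
  have := abs_le.1 (inner_le A₀' b h₀')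
  have := abs_le.1 (inner_le A₁ b h₁)
  have := abs_le.1 (inner_le A₂ a h₂)
  nlinarith

structure DecayingL2WithDeriv (v v' : ℝ → E) : Prop where
  hasDerivWithinAt : ∀ x ∈ Ici (0 : ℝ), HasDerivWithinAt v (v' x) (Ici 0) x
  integrableOn_norm_sq : IntegrableOn (fun x => ‖v x‖ ^ 2) (Ioi 0)
  tendsto_atTop : Tendsto v atTop (𝓝 0)

namespace DecayingL2WithDeriv

variable {v v' : ℝ → E}

theorem aestronglyMeasurable (h : DecayingL2WithDeriv v v') :
    AEStronglyMeasurable v (volume.restrict (Ioi 0)) :=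
  aestronglyMeasurable_Ioi_of_hasDerivWithinAt h.hasDerivWithinAt

theorem aestronglyMeasurable_deriv [CompleteSpace E] (h : DecayingL2WithDeriv v v') :
    AEStronglyMeasurable v' (volume.restrict (Ioi 0)) :=
  aestronglyMeasurable_deriv_Ioi_of_hasDerivWithinAt h.hasDerivWithinAt

theorem integrableOn_inner_clm_apply {g g' : ℝ → E} {A : ℝ → E →L[ℝ] E} {M : ℝ}
    (h : DecayingL2WithDeriv v v') (hg : DecayingL2WithDeriv g g')
    (hA : AEStronglyMeasurable A (volume.restrict (Ioi 0))) (hAM : ∀ x ∈ Ioi (0 : ℝ), ‖A x‖ ≤ M) :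
    IntegrableOn (fun x => ⟪v x, A x (g x)⟫) (Ioi 0) :=
  integrable_inner_clm_apply h.aestronglyMeasurable hA hg.aestronglyMeasurable
    ((ae_restrict_iff' measurableSet_Ioi).2 (ae_of_all _ hAM)) h.integrableOn_norm_sq
    hg.integrableOn_norm_sq

end DecayingL2WithDeriv

variable [CompleteSpace E] {v v₁ v₂ v₃ : ℝ → E}

theorem integral_inner_third_deriv_eq_zero (h : DecayingL2WithDeriv v v₁)
    (h₁ : DecayingL2WithDeriv v₁ v₂) (h₂ : DecayingL2WithDeriv v₂ v₃)
    (h₃ : IntegrableOn (fun x => ‖v₃ x‖ ^ 2) (Ioi 0)) (hv : v 0 = 0) (hv₁ : v₁ 0 = 0) :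
    ∫ x in Ioi 0, ⟪v x, v₃ x⟫ = 0 := by
  have hderiv : ∀ x ∈ Ici (0 : ℝ), HasDerivWithinAt (fun x => ⟪v x, v₂ x⟫ - ⟪v₁ x, v₁ x⟫ / 2)
      ⟪v x, v₃ x⟫ (Ici 0) x := by
    intro x hx
    refine (((h.hasDerivWithinAt x hx).inner ℝ (h₂.hasDerivWithinAt x hx)).sub
      (((h₁.hasDerivWithinAt x hx).inner ℝ (h₁.hasDerivWithinAt x hx)).div_const 2)).congr_deriv ?_
    rw [real_inner_comm (v₂ x)]
    ring
  have hlim : Tendsto (fun x => ⟪v x, v₂ x⟫ - ⟪v₁ x, v₁ x⟫ / 2) atTop (𝓝 0) := by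
    simpa using (h.tendsto_atTop.inner (𝕜 := ℝ) h₂.tendsto_atTop).sub
      ((h₁.tendsto_atTop.inner (𝕜 := ℝ) h₁.tendsto_atTop).div_const 2)
  have hint : IntegrableOn (fun x => ⟪v x, v₃ x⟫) (Ioi 0) :=
    integrable_inner_of_integrable_norm_sq h.aestronglyMeasurable h₂.aestronglyMeasurable_deriv
      h.integrableOn_norm_sq h₃
  simpa [hv, hv₁] using integral_Ioi_of_hasDerivWithinAt_Ici hderiv hint hlim

theorem integral_inner_clm_apply_second_deriv {B B' : ℝ → E →L[ℝ] E} {M : ℝ}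
    (h : DecayingL2WithDeriv v v₁) (h₁ : DecayingL2WithDeriv v₁ v₂)
    (h₂ : IntegrableOn (fun x => ‖v₂ x‖ ^ 2) (Ioi 0)) (hv : v 0 = 0)
    (hB : ∀ x ∈ Ici (0 : ℝ), HasDerivWithinAt B (B' x) (Ici 0) x)
    (hM : ∀ x ∈ Ioi (0 : ℝ), ‖B x‖ ≤ M ∧ ‖B' x‖ ≤ M) :
    ∫ x in Ioi 0, ⟪v x, B x (v₂ x)⟫ =
      -∫ x in Ioi 0, (⟪v₁ x, B x (v₁ x)⟫ + ⟪v x, B' x (v₁ x)⟫) := by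
  have hBm := aestronglyMeasurable_Ioi_of_hasDerivWithinAt hB
  have i₂ : IntegrableOn (fun x => ⟪v x, B x (v₂ x)⟫) (Ioi 0) :=
    integrable_inner_clm_apply h.aestronglyMeasurable hBm h₁.aestronglyMeasurable_deriv
      ((ae_restrict_iff' measurableSet_Ioi).2 (ae_of_all _ fun x hx => (hM x hx).1))
      h.integrableOn_norm_sq h₂
  have i₁ : IntegrableOn (fun x => ⟪v₁ x, B x (v₁ x)⟫ + ⟪v x, B' x (v₁ x)⟫) (Ioi 0) :=
    (h₁.integrableOn_inner_clm_apply h₁ hBm fun x hx => (hM x hx).1).add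
      (h.integrableOn_inner_clm_apply h₁ (aestronglyMeasurable_deriv_Ioi_of_hasDerivWithinAt hB)
        fun x hx => (hM x hx).2)
  have hderiv : ∀ x ∈ Ici (0 : ℝ), HasDerivWithinAt (fun x => ⟪v x, B x (v₁ x)⟫)
      (⟪v x, B x (v₂ x)⟫ + (⟪v₁ x, B x (v₁ x)⟫ + ⟪v x, B' x (v₁ x)⟫)) (Ici 0) x := by
    intro x hx
    refine ((h.hasDerivWithinAt x hx).inner ℝ
      ((hB x hx).clm_apply (h₁.hasDerivWithinAt x hx))).congr_deriv ?_
    rw [inner_add_right]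
    ring
  have hlim : Tendsto (fun x => ⟪v x, B x (v₁ x)⟫) atTop (𝓝 0) := by
    have hbound : Tendsto (fun x => M * (‖v x‖ * ‖v₁ x‖)) atTop (𝓝 0) := by
      simpa using (h.tendsto_atTop.norm.mul h₁.tendsto_atTop.norm).const_mul M
    refine squeeze_zero_norm' ?_ hbound
    filter_upwards [eventually_gt_atTop 0] with x hx
    rw [Real.norm_eq_abs, ← mul_assoc, mul_comm M, mul_assoc]
    exact (abs_real_inner_le_norm _ _).trans (mul_le_mul_of_nonneg_left
      ((B x).le_of_opNorm_le (hM x hx).1 _) (norm_nonneg _))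
  have hFTC := integral_Ioi_of_hasDerivWithinAt_Ici hderiv (i₂.add i₁) hlim
  rw [integral_add i₂ i₁] at hFTC
  simp only [hv, inner_zero_left, sub_zero] at hFTC
  linarith

theorem integral_two_mul_inner_le_mul_integral_norm_sq {α δ M : ℝ} {w : ℝ → E}
    {B₀ B₀' B₁ B₂ : ℝ → E →L[ℝ] E}
    (h : DecayingL2WithDeriv v v₁) (h₁ : DecayingL2WithDeriv v₁ v₂)
    (h₂ : DecayingL2WithDeriv v₂ v₃) (h₃ : IntegrableOn (fun x => ‖v₃ x‖ ^ 2) (Ioi 0))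
    (hv : v 0 = 0) (hv₁ : v₁ 0 = 0)
    (hB₀ : ∀ x ∈ Ici (0 : ℝ), HasDerivWithinAt B₀ (B₀' x) (Ici 0) x)
    (hB₁ : ContinuousOn B₁ (Ioi 0)) (hB₂ : ContinuousOn B₂ (Ioi 0))
    (hM : ∀ x ∈ Ioi (0 : ℝ), ‖B₀ x‖ ≤ M ∧ ‖B₀' x‖ ≤ M ∧ ‖B₁ x‖ ≤ M ∧ ‖B₂ x‖ ≤ M)
    (hδ : 0 < δ) (hell : ∀ x ∈ Ioi (0 : ℝ), ∀ ξ, δ * ‖ξ‖ ^ 2 ≤ ⟪ξ, B₀ x ξ⟫ + ⟪B₀ x ξ, ξ⟫)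
    (hw : ∀ x ∈ Ioi (0 : ℝ), w x = α • v₃ x + B₀ x (v₂ x) + B₁ x (v₁ x) + B₂ x (v x)) :
    ∫ x in Ioi 0, 2 * ⟪v x, w x⟫ ≤ (4 * M ^ 2 / δ + 2 * M) * ∫ x in Ioi 0, ‖v x‖ ^ 2 := by
  set Q : ℝ → ℝ := fun x => ⟪v x, B₁ x (v₁ x)⟫ + ⟪v x, B₂ x (v x)⟫
  set P : ℝ → ℝ := fun x => ⟪v₁ x, B₀ x (v₁ x)⟫ + ⟪v x, B₀' x (v₁ x)⟫
  have hB₀m := aestronglyMeasurable_Ioi_of_hasDerivWithinAt hB₀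
  have i₃ : IntegrableOn (fun x => ⟪v x, v₃ x⟫) (Ioi 0) :=
    integrable_inner_of_integrable_norm_sq h.aestronglyMeasurable h₂.aestronglyMeasurable_deriv
      h.integrableOn_norm_sq h₃
  have i₂ : IntegrableOn (fun x => ⟪v x, B₀ x (v₂ x)⟫) (Ioi 0) :=
    h.integrableOn_inner_clm_apply h₂ hB₀m fun x hx => (hM x hx).1
  have iQ : IntegrableOn Q (Ioi 0) :=
    (h.integrableOn_inner_clm_apply h₁ (hB₁.aestronglyMeasurable measurableSet_Ioi)
      fun x hx => (hM x hx).2.2.1).add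
    (h.integrableOn_inner_clm_apply h (hB₂.aestronglyMeasurable measurableSet_Ioi)
      fun x hx => (hM x hx).2.2.2)
  have iP : IntegrableOn P (Ioi 0) :=
    (h₁.integrableOn_inner_clm_apply h₁ hB₀m fun x hx => (hM x hx).1).add
    (h.integrableOn_inner_clm_apply h₁ (aestronglyMeasurable_deriv_Ioi_of_hasDerivWithinAt hB₀)
      fun x hx => (hM x hx).2.1)
  calc ∫ x in Ioi 0, 2 * ⟪v x, w x⟫
      = ∫ x in Ioi 0, (2 * α * ⟪v x, v₃ x⟫ + 2 * ⟪v x, B₀ x (v₂ x)⟫ + 2 * Q x) := by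
        refine setIntegral_congr_fun measurableSet_Ioi fun x hx => ?_
        simp only [Q, hw x hx, inner_add_right, real_inner_smul_right]
        ring
    _ = 2 * α * (∫ x in Ioi 0, ⟪v x, v₃ x⟫) + 2 * (∫ x in Ioi 0, ⟪v x, B₀ x (v₂ x)⟫)
          + 2 * ∫ x in Ioi 0, Q x := by
        rw [integral_add, integral_add, integral_const_mul, integral_const_mul, integral_const_mul]
        exacts [i₃.const_mul _, i₂.const_mul _, (i₃.const_mul _).add (i₂.const_mul _),
          iQ.const_mul _]
    _ = ∫ x in Ioi 0, 2 * (Q x - P x) := by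
        rw [integral_inner_third_deriv_eq_zero h h₁ h₂ h₃ hv hv₁,
          integral_inner_clm_apply_second_deriv h h₁ h₂.integrableOn_norm_sq hv hB₀
            fun x hx => ⟨(hM x hx).1, (hM x hx).2.1⟩,
          integral_const_mul, integral_sub iQ iP]
        ring
    _ ≤ ∫ x in Ioi 0, (4 * M ^ 2 / δ + 2 * M) * ‖v x‖ ^ 2 := by
        refine setIntegral_mono_on ((iQ.sub iP).const_mul 2) (h.integrableOn_norm_sq.const_mul _)
          measurableSet_Ioi fun x hx => ?_
        obtain ⟨-, h₀', h₁', h₂'⟩ := hM x hx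
        exact two_mul_inner_lower_order_le hδ (hell x hx (v₁ x)) h₀' h₁' h₂'
    _ = (4 * M ^ 2 / δ + 2 * M) * ∫ x in Ioi 0, ‖v x‖ ^ 2 := integral_const_mul _ _

end HalfLine

theorem stmt18_general (α δ T : ℝ) (hδ : 0 < δ) (m : ℕ)
    (B₀ B₁ B₂ : ℝ → ℝ → (EuclideanSpace ℝ (Fin m) →L[ℝ] EuclideanSpace ℝ (Fin m)))
    -- the coefficients are C¹ and bounded together with their first derivatives
    (hB : ∀ B ∈ ({B₀, B₁, B₂} :
        Set (ℝ → ℝ → (EuclideanSpace ℝ (Fin m) →L[ℝ] EuclideanSpace ℝ (Fin m)))),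
      ContDiffOn ℝ 1 (fun p : ℝ × ℝ => B p.1 p.2) (Ici 0 ×ˢ Icc 0 T) ∧
      ∃ M : ℝ, ∀ p ∈ (Ici 0 ×ˢ Icc 0 T : Set (ℝ × ℝ)),
        ‖B p.1 p.2‖ ≤ M ∧
        ‖fderivWithin ℝ (fun p : ℝ × ℝ => B p.1 p.2) (Ici 0 ×ˢ Icc 0 T) p‖ ≤ M)
    -- strong ellipticity of B₀
    (hell : ∀ x ∈ Ici (0 : ℝ), ∀ t ∈ Icc (0 : ℝ) T, ∀ ξ : EuclideanSpace ℝ (Fin m),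
      δ * ‖ξ‖ ^ 2 ≤ (inner ℝ ξ (B₀ x t ξ) : ℝ) + (inner ℝ (B₀ x t ξ) ξ : ℝ))
    (u u1 u2 u3 ut ut1 : ℝ → ℝ → EuclideanSpace ℝ (Fin m))
    -- u is smooth: space derivatives u1, u2, u3 and time derivatives ut, ut1, ut2
    (hd1 : ∀ t ∈ Icc (0 : ℝ) T, ∀ x ∈ Ici (0 : ℝ),
      HasDerivWithinAt (fun x => u x t) (u1 x t) (Ici 0) x)
    (hd2 : ∀ t ∈ Icc (0 : ℝ) T, ∀ x ∈ Ici (0 : ℝ),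
      HasDerivWithinAt (fun x => u1 x t) (u2 x t) (Ici 0) x)
    (hd3 : ∀ t ∈ Icc (0 : ℝ) T, ∀ x ∈ Ici (0 : ℝ),
      HasDerivWithinAt (fun x => u2 x t) (u3 x t) (Ici 0) x)
    -- square integrability in x on (0,∞)
    (hint : ∀ t ∈ Icc (0 : ℝ) T,
      IntegrableOn (fun x => ‖u x t‖ ^ 2) (Ioi 0) ∧
      IntegrableOn (fun x => ‖u1 x t‖ ^ 2) (Ioi 0) ∧
      IntegrableOn (fun x => ‖u2 x t‖ ^ 2) (Ioi 0) ∧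
      IntegrableOn (fun x => ‖u3 x t‖ ^ 2) (Ioi 0) ∧
      IntegrableOn (fun x => ‖ut x t‖ ^ 2) (Ioi 0) ∧
      IntegrableOn (fun x => ‖ut1 x t‖ ^ 2) (Ioi 0))
    -- decay as x → ∞
    (hdec : ∀ t ∈ Icc (0 : ℝ) T,
      Tendsto (fun x => ‖u x t‖ + ‖u1 x t‖ + ‖u2 x t‖ + ‖u3 x t‖ + ‖ut x t‖ + ‖ut1 x t‖)
        atTop (nhds 0))
    -- differentiation under the integral sign for the energies ‖∂ₓʲu(·,t)‖², j = 0,1,2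
    (hE0 : ∀ t ∈ Icc (0 : ℝ) T,
      HasDerivWithinAt (fun t => ∫ x in Ioi (0 : ℝ), ‖u x t‖ ^ 2)
        (∫ x in Ioi (0 : ℝ), 2 * (inner ℝ (u x t) (ut x t) : ℝ)) (Icc 0 T) t)
    -- the equation on (0,∞) × (0,T)
    (hPDE : ∀ x ∈ Ioi (0 : ℝ), ∀ t ∈ Ioo (0 : ℝ) T,
      ut x t = α • u3 x t + B₀ x t (u2 x t) + B₁ x t (u1 x t) + B₂ x t (u x t))
    -- zero initial data
    (hinit : ∀ x ∈ Ici (0 : ℝ), u x 0 = 0)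
    -- Dirichlet and Neumann boundary conditions
    (hbdryD : ∀ t ∈ Icc (0 : ℝ) T, u 0 t = 0)
    (hbdryN : ∀ t ∈ Icc (0 : ℝ) T, u1 0 t = 0) :
    ∀ x ∈ Ici (0 : ℝ), ∀ t ∈ Icc (0 : ℝ) T, u x t = 0 := by
  obtain ⟨hB₀, M₀, hM₀⟩ := hB B₀ (by simp)
  obtain ⟨hB₁, M₁, hM₁⟩ := hB B₁ (by simp)
  obtain ⟨hB₂, M₂, hM₂⟩ := hB B₂ (by simp)
  set M := max M₀ (max M₁ M₂)
  have hM : M₀ ≤ M ∧ M₁ ≤ M ∧ M₂ ≤ M :=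
    ⟨le_max_left _ _, le_max_of_le_right (le_max_left _ _), le_max_of_le_right (le_max_right _ _)⟩
  have hlim : ∀ t ∈ Icc (0 : ℝ) T, Tendsto (u · t) atTop (𝓝 0) ∧
      Tendsto (u1 · t) atTop (𝓝 0) ∧ Tendsto (u2 · t) atTop (𝓝 0) := fun t ht => by
    refine ⟨?_, ?_, ?_⟩ <;> refine squeeze_zero_norm (fun x => ?_) (hdec t ht) <;>
      linarith [norm_nonneg (u x t), norm_nonneg (u1 x t), norm_nonneg (u2 x t),
        norm_nonneg (u3 x t), norm_nonneg (ut x t), norm_nonneg (ut1 x t)]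
  have hbound : ∀ t ∈ Ico 0 T, ∫ x in Ioi 0, 2 * ⟪u x t, ut x t⟫ ≤
      (4 * M ^ 2 / δ + 2 * M) * ∫ x in Ioi 0, ‖u x t‖ ^ 2 := by
    rintro t ⟨ht₀, htT⟩
    obtain rfl | ht₀ := ht₀.eq_or_lt
    · rw [setIntegral_eq_zero_of_forall_eq_zero, setIntegral_eq_zero_of_forall_eq_zero, mul_zero]
        <;> intro x hx <;> simp [hinit x hx.out.le]
    have ht : t ∈ Icc 0 T := ⟨ht₀.le, htT.le⟩
    obtain ⟨i₀, i₁, i₂, i₃, -, -⟩ := hint t ht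
    obtain ⟨B₀', hB₀'⟩ := exists_hasDerivWithinAt_comp_prodMk_le
      (hB₀.differentiableOn one_ne_zero) (fun p hp => (hM₀ p hp).2) ht
    exact integral_two_mul_inner_le_mul_integral_norm_sq ⟨hd1 t ht, i₀, (hlim t ht).1⟩
      ⟨hd2 t ht, i₁, (hlim t ht).2.1⟩ ⟨hd3 t ht, i₂, (hlim t ht).2.2⟩ i₃
      (hbdryD t ht) (hbdryN t ht) (fun x hx => (hB₀' x hx).1)
      ((hB₁.continuousOn.uncurry_right t ht).mono Ioi_subset_Ici_self)
      ((hB₂.continuousOn.uncurry_right t ht).mono Ioi_subset_Ici_self)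
      (fun x hx => ⟨(hM₀ (x, t) ⟨hx.out.le, ht⟩).1.trans hM.1, (hB₀' x hx.out.le).2.trans hM.1,
        (hM₁ (x, t) ⟨hx.out.le, ht⟩).1.trans hM.2.1, (hM₂ (x, t) ⟨hx.out.le, ht⟩).1.trans hM.2.2⟩)
      hδ (fun x hx => hell x hx.out.le t ht) (fun x hx => hPDE x hx t ⟨ht₀, htT⟩)
  have hE := le_zero_of_hasDerivWithinAt_le_mul_self hE0
    (setIntegral_eq_zero_of_forall_eq_zero fun x hx => by simp [hinit x hx.out.le]).le hbound
  intro x hx t ht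
  obtain rfl | hx := hx.out.eq_or_lt
  · exact hbdryD t ht
  · exact eqOn_zero_of_integral_norm_sq_le_zero isOpen_Ioi
      (ContinuousOn.mono (fun y hy => (hd1 t ht y hy).continuousWithinAt) Ioi_subset_Ici_self)
      (hint t ht).1 (hE t ht) hx

/-- Uniqueness for the half-line initial-boundary value problem with `α > 0`:
a classical solution of `u_t = α u_{xxx} + B₀ u_{xx} + B₁ u_x + B₂ u` on `(0,∞) × (0,T)`
with square-integrable decaying derivatives, zero initial data `u(x,0) = 0`, and the two
boundary conditions `u(0,t) = 0` and `u_x(0,t) = 0`, vanishes identically, provided the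
matrix coefficients are `C¹`, bounded with their first derivatives, and `B₀` is strongly
elliptic: `ξ·(B₀ + B₀ᵀ)ξ ≥ δ|ξ|²`. -/
theorem stmt18 (α δ T : ℝ) (hα : 0 < α) (hδ : 0 < δ) (hT : 0 < T) (m : ℕ) (hm : 0 < m)
    (B₀ B₁ B₂ : ℝ → ℝ → (EuclideanSpace ℝ (Fin m) →L[ℝ] EuclideanSpace ℝ (Fin m)))
    -- the coefficients are C¹ and bounded together with their first derivatives
    (hB : ∀ B ∈ ({B₀, B₁, B₂} :
        Set (ℝ → ℝ → (EuclideanSpace ℝ (Fin m) →L[ℝ] EuclideanSpace ℝ (Fin m)))),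
      ContDiffOn ℝ 1 (fun p : ℝ × ℝ => B p.1 p.2) (Ici 0 ×ˢ Icc 0 T) ∧
      ∃ M : ℝ, ∀ p ∈ (Ici 0 ×ˢ Icc 0 T : Set (ℝ × ℝ)),
        ‖B p.1 p.2‖ ≤ M ∧
        ‖fderivWithin ℝ (fun p : ℝ × ℝ => B p.1 p.2) (Ici 0 ×ˢ Icc 0 T) p‖ ≤ M)
    -- strong ellipticity of B₀
    (hell : ∀ x ∈ Ici (0 : ℝ), ∀ t ∈ Icc (0 : ℝ) T, ∀ ξ : EuclideanSpace ℝ (Fin m),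
      δ * ‖ξ‖ ^ 2 ≤ (inner ℝ ξ (B₀ x t ξ) : ℝ) + (inner ℝ (B₀ x t ξ) ξ : ℝ))
    (u u1 u2 u3 ut ut1 ut2 : ℝ → ℝ → EuclideanSpace ℝ (Fin m))
    -- u is smooth: space derivatives u1, u2, u3 and time derivatives ut, ut1, ut2
    (hd1 : ∀ t ∈ Icc (0 : ℝ) T, ∀ x ∈ Ici (0 : ℝ),
      HasDerivWithinAt (fun x => u x t) (u1 x t) (Ici 0) x)
    (hd2 : ∀ t ∈ Icc (0 : ℝ) T, ∀ x ∈ Ici (0 : ℝ),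
      HasDerivWithinAt (fun x => u1 x t) (u2 x t) (Ici 0) x)
    (hd3 : ∀ t ∈ Icc (0 : ℝ) T, ∀ x ∈ Ici (0 : ℝ),
      HasDerivWithinAt (fun x => u2 x t) (u3 x t) (Ici 0) x)
    (hdt : ∀ x ∈ Ici (0 : ℝ), ∀ t ∈ Icc (0 : ℝ) T,
      HasDerivWithinAt (fun t => u x t) (ut x t) (Icc 0 T) t)
    (hdt1 : ∀ x ∈ Ici (0 : ℝ), ∀ t ∈ Icc (0 : ℝ) T,
      HasDerivWithinAt (fun t => u1 x t) (ut1 x t) (Icc 0 T) t)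
    (hdt2 : ∀ x ∈ Ici (0 : ℝ), ∀ t ∈ Icc (0 : ℝ) T,
      HasDerivWithinAt (fun t => u2 x t) (ut2 x t) (Icc 0 T) t)
    (hcont : ∀ f ∈ ({u, u1, u2, u3, ut, ut1, ut2} :
        Set (ℝ → ℝ → EuclideanSpace ℝ (Fin m))),
      ContinuousOn (fun p : ℝ × ℝ => f p.1 p.2) (Ici 0 ×ˢ Icc 0 T))
    -- square integrability in x on (0,∞)
    (hint : ∀ t ∈ Icc (0 : ℝ) T,
      IntegrableOn (fun x => ‖u x t‖ ^ 2) (Ioi 0) ∧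
      IntegrableOn (fun x => ‖u1 x t‖ ^ 2) (Ioi 0) ∧
      IntegrableOn (fun x => ‖u2 x t‖ ^ 2) (Ioi 0) ∧
      IntegrableOn (fun x => ‖u3 x t‖ ^ 2) (Ioi 0) ∧
      IntegrableOn (fun x => ‖ut x t‖ ^ 2) (Ioi 0) ∧
      IntegrableOn (fun x => ‖ut1 x t‖ ^ 2) (Ioi 0))
    -- decay as x → ∞
    (hdec : ∀ t ∈ Icc (0 : ℝ) T,
      Tendsto (fun x => ‖u x t‖ + ‖u1 x t‖ + ‖u2 x t‖ + ‖u3 x t‖ + ‖ut x t‖ + ‖ut1 x t‖)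
        atTop (nhds 0))
    -- differentiation under the integral sign for the energies ‖∂ₓʲu(·,t)‖², j = 0,1,2
    (hE0 : ∀ t ∈ Icc (0 : ℝ) T,
      HasDerivWithinAt (fun t => ∫ x in Ioi (0 : ℝ), ‖u x t‖ ^ 2)
        (∫ x in Ioi (0 : ℝ), 2 * (inner ℝ (u x t) (ut x t) : ℝ)) (Icc 0 T) t)
    (hE1 : ∀ t ∈ Icc (0 : ℝ) T,
      HasDerivWithinAt (fun t => ∫ x in Ioi (0 : ℝ), ‖u1 x t‖ ^ 2)
        (∫ x in Ioi (0 : ℝ), 2 * (inner ℝ (u1 x t) (ut1 x t) : ℝ)) (Icc 0 T) t)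
    (hE2 : ∀ t ∈ Icc (0 : ℝ) T,
      HasDerivWithinAt (fun t => ∫ x in Ioi (0 : ℝ), ‖u2 x t‖ ^ 2)
        (∫ x in Ioi (0 : ℝ), 2 * (inner ℝ (u2 x t) (ut2 x t) : ℝ)) (Icc 0 T) t)
    -- the equation on (0,∞) × (0,T)
    (hPDE : ∀ x ∈ Ioi (0 : ℝ), ∀ t ∈ Ioo (0 : ℝ) T,
      ut x t = α • u3 x t + B₀ x t (u2 x t) + B₁ x t (u1 x t) + B₂ x t (u x t))
    -- zero initial data
    (hinit : ∀ x ∈ Ici (0 : ℝ), u x 0 = 0)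
    -- Dirichlet and Neumann boundary conditions
    (hbdryD : ∀ t ∈ Icc (0 : ℝ) T, u 0 t = 0)
    (hbdryN : ∀ t ∈ Icc (0 : ℝ) T, u1 0 t = 0) :
    ∀ x ∈ Ici (0 : ℝ), ∀ t ∈ Icc (0 : ℝ) T, u x t = 0 :=
  stmt18_general α δ T hδ m B₀ B₁ B₂ hB hell u u1 u2 u3 ut ut1 hd1 hd2 hd3 hint hdec hE0 hPDE hinit
    hbdryD hbdryN
end
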